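/- arXiv:1211.4166 — 3 statements merged into one kernel-verified Lean document; each statement's English description precedes it below -/
import Mathlib

section
/- Let z = z(x,y) be a C² convex function on the rectangle [-c,c] × [0,b] (with b, c > 0). Suppose that z_x(x,0) = z_y(x,0) = 0 for all x ∈ [-c,c], and that m ≤ z_yy(x,y) ≤ M throughout the rectangle. Then there exists a point x ∈ [-c,c] such that z_xx(x,b) ≤ (M - m)·b²/c². -/
/-!
Restricted to the top edge, `w(x) = z(x, b)` has, by the second-order mean value theorem, some
`ξ ∈ [-c, c]` with `c² w''(ξ) ≤ w(c) + w(-c) - 2 w(0)`. Along each vertical segment `z_y` starts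
at `0`, so Taylor's formula gives `m b²/2 ≤ z(x, b) - z(x, 0) ≤ M b²/2`, while `z(·, 0)` is constant
because `z_x` vanishes on the bottom edge. Hence the symmetric second difference of `w` is at most
`(M - m) b²`.
-/

open Set

section Slices

variable {𝕜 E : Type*} [NontriviallyNormedField 𝕜] [NormedAddCommGroup E] [NormedSpace 𝕜 E]
  {F : 𝕜 × 𝕜 → E} {s t : Set 𝕜} {x y : 𝕜}

theorem DifferentiableWithinAt.hasDerivWithinAt_slice_fst
    (hF : DifferentiableWithinAt 𝕜 F (s ×ˢ t) (x, y)) (hy : y ∈ t) :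
    HasDerivWithinAt (fun u => F (u, y)) (fderivWithin 𝕜 F (s ×ˢ t) (x, y) (1, 0)) s x :=
  hF.hasFDerivWithinAt.comp_hasDerivWithinAt x
    ((hasDerivAt_id x).prodMk (hasDerivAt_const x y)).hasDerivWithinAt
    fun _ hu => mk_mem_prod hu hy

theorem DifferentiableWithinAt.hasDerivWithinAt_slice_snd
    (hF : DifferentiableWithinAt 𝕜 F (s ×ˢ t) (x, y)) (hx : x ∈ s) :
    HasDerivWithinAt (fun u => F (x, u)) (fderivWithin 𝕜 F (s ×ˢ t) (x, y) (0, 1)) t y :=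
  hF.hasFDerivWithinAt.comp_hasDerivWithinAt y
    ((hasDerivAt_const y x).prodMk (hasDerivAt_id y)).hasDerivWithinAt
    fun _ hu => mk_mem_prod hx hu

end Slices

theorem exists_mem_Ioo_taylor_two {f f' f'' : ℝ → ℝ} {a b : ℝ} (hab : a < b)
    (hf : ∀ x ∈ Icc a b, HasDerivWithinAt f (f' x) (Icc a b) x)
    (hf' : ∀ x ∈ Icc a b, HasDerivWithinAt f' (f'' x) (Icc a b) x) :
    ∃ ξ ∈ Ioo a b, f b - f a - f' a * (b - a) = f'' ξ * (b - a) ^ 2 / 2 := by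
  have toHasDerivAt {g g' : ℝ → ℝ} (hg : ∀ x ∈ Icc a b, HasDerivWithinAt g (g' x) (Icc a b) x)
      (x : ℝ) (hx : x ∈ Ioo a b) : HasDerivAt g (g' x) x :=
    (hg x (Ioo_subset_Icc_self hx)).hasDerivAt (Icc_mem_nhds hx.1 hx.2)
  obtain ⟨s, hs, hcauchy⟩ := exists_ratio_hasDerivAt_eq_ratio_slope
    (fun t => f t - f' a * t) (fun t => f' t - f' a) hab
    (fun x hx => (hf x hx).continuousWithinAt.sub
      (continuousWithinAt_const.mul continuousWithinAt_id))
    (fun x hx => ((toHasDerivAt hf x hx).sub ((hasDerivAt_id x).const_mul (f' a))).congr_deriv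
      (by ring))
    (fun t => (t - a) ^ 2) (fun t => 2 * (t - a)) (by fun_prop)
    (fun x _ => by simpa using ((hasDerivAt_id x).sub_const a).fun_pow 2)
  obtain ⟨ξ, hξ, hmvt⟩ := exists_hasDerivAt_eq_slope f' f'' hs.1
    (fun x hx => (hf' x ⟨hx.1, hx.2.trans hs.2.le⟩).continuousWithinAt.mono
      (Icc_subset_Icc_right hs.2.le))
    (fun x hx => toHasDerivAt hf' x ⟨hx.1, hx.2.trans hs.2⟩)
  refine ⟨ξ, ⟨hξ.1, hξ.2.trans hs.2⟩, ?_⟩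
  have hsa : 0 < s - a := sub_pos.2 hs.1
  rw [eq_div_iff hsa.ne'] at hmvt
  apply mul_right_cancel₀ hsa.ne'
  rw [sub_self, zero_pow two_ne_zero, sub_zero] at hcauchy
  linear_combination (-1 / 2 : ℝ) * hcauchy - (b - a) ^ 2 / 2 * hmvt

theorem exists_mem_Icc_second_deriv_mul_sq_le {f f' f'' : ℝ → ℝ} {c : ℝ} (hc : 0 < c)
    (hf : ∀ x ∈ Icc (-c) c, HasDerivWithinAt f (f' x) (Icc (-c) c) x)
    (hf' : ∀ x ∈ Icc (-c) c, HasDerivWithinAt f' (f'' x) (Icc (-c) c) x) :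
    ∃ ξ ∈ Icc (-c) c, f'' ξ * c ^ 2 ≤ f c + f (-c) - 2 * f 0 := by
  have hsub : Icc 0 c ⊆ Icc (-c) c := Icc_subset_Icc_left (by linarith)
  have hneg : MapsTo (fun x : ℝ => -x) (Icc 0 c) (Icc (-c) c) :=
    fun x hx => ⟨neg_le_neg hx.2, by linarith [hx.1]⟩
  have reflect {g g' : ℝ → ℝ} (hg : ∀ x ∈ Icc (-c) c, HasDerivWithinAt g (g' x) (Icc (-c) c) x)
      (x : ℝ) (hx : x ∈ Icc 0 c) : HasDerivWithinAt (fun t => g (-t)) (-g' (-x)) (Icc 0 c) x := by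
    have := (hg (-x) (hneg hx)).comp x (hasDerivAt_neg x).hasDerivWithinAt hneg
    rwa [mul_neg_one] at this
  obtain ⟨ξ₁, hξ₁, hright⟩ := exists_mem_Ioo_taylor_two hc
    (fun x hx => (hf x (hsub hx)).mono hsub) (fun x hx => (hf' x (hsub hx)).mono hsub)
  obtain ⟨ξ₂, hξ₂, hleft⟩ := exists_mem_Ioo_taylor_two (f := fun t => f (-t)) hc (reflect hf)
    (fun x hx => by simpa only [neg_neg] using (reflect hf' x hx).fun_neg)
  simp only [neg_zero, sub_zero] at hright hleft
  rcases le_total (f'' ξ₁) (f'' (-ξ₂)) with h | h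
  · exact ⟨ξ₁, hsub (Ioo_subset_Icc_self hξ₁), by nlinarith⟩
  · exact ⟨-ξ₂, hneg (Ioo_subset_Icc_self hξ₂), by nlinarith⟩

theorem convex_rectangle_lemma_general (b c m M : ℝ) (hb : 0 < b) (hc : 0 < c)
    (z : ℝ × ℝ → ℝ) (R : Set (ℝ × ℝ)) (hR : R = Set.Icc (-c) c ×ˢ Set.Icc 0 b)
    (hsmooth : ContDiffOn ℝ 2 z R)
    (hzx0 : ∀ x ∈ Set.Icc (-c) c, fderivWithin ℝ z R (x, 0) (1, 0) = 0)
    (hzy0 : ∀ x ∈ Set.Icc (-c) c, fderivWithin ℝ z R (x, 0) (0, 1) = 0)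
    (hzyy : ∀ p ∈ R,
      m ≤ fderivWithin ℝ (fun q => fderivWithin ℝ z R q (0, 1)) R p (0, 1) ∧
      fderivWithin ℝ (fun q => fderivWithin ℝ z R q (0, 1)) R p (0, 1) ≤ M) :
    ∃ x ∈ Set.Icc (-c) c,
      fderivWithin ℝ (fun q => fderivWithin ℝ z R q (1, 0)) R (x, b) (1, 0)
        ≤ (M - m) * b ^ 2 / c ^ 2 := by
  subst hR
  set R := Icc (-c) c ×ˢ Icc 0 b
  have hcc : -c < c := by linarith
  have hz : DifferentiableOn ℝ z R := hsmooth.differentiableOn (by norm_num)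
  have hDz (v : ℝ × ℝ) : DifferentiableOn ℝ (fun q => fderivWithin ℝ z R q v) R :=
    ((hsmooth.fderivWithin ((uniqueDiffOn_Icc hcc).prod (uniqueDiffOn_Icc hb)) le_rfl).clm_apply
      contDiffOn_const).differentiableOn one_ne_zero
  have hvertical (x : ℝ) (hx : x ∈ Icc (-c) c) :
      m * b ^ 2 / 2 ≤ z (x, b) - z (x, 0) ∧ z (x, b) - z (x, 0) ≤ M * b ^ 2 / 2 := by
    obtain ⟨η, hη, hη_eq⟩ := exists_mem_Ioo_taylor_two hb
      (fun y hy => (hz _ ⟨hx, hy⟩).hasDerivWithinAt_slice_snd hx)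
      (fun y hy => (hDz (0, 1) _ ⟨hx, hy⟩).hasDerivWithinAt_slice_snd hx)
    rw [hzy0 x hx, zero_mul, sub_zero, sub_zero] at hη_eq
    obtain ⟨hm, hM⟩ := hzyy (x, η) ⟨hx, Ioo_subset_Icc_self hη⟩
    rw [hη_eq]
    constructor <;> gcongr
  have hbottom (x : ℝ) (hx : x ∈ Icc (-c) c) : z (x, 0) = z (-c, 0) := by
    have h0 : (0 : ℝ) ∈ Icc 0 b := left_mem_Icc.2 hb.le
    simpa [sub_eq_zero] using norm_image_sub_le_of_norm_deriv_le_segment' (C := 0)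
      (fun x hx => (hz _ ⟨hx, h0⟩).hasDerivWithinAt_slice_fst h0)
      (fun x hx => by rw [hzx0 x (Ico_subset_Icc_self hx), norm_zero]) x hx
  have hb' : b ∈ Icc 0 b := right_mem_Icc.2 hb.le
  obtain ⟨ξ, hξ, hsecond⟩ := exists_mem_Icc_second_deriv_mul_sq_le hc
    (fun x hx => (hz _ ⟨hx, hb'⟩).hasDerivWithinAt_slice_fst hb')
    (fun x hx => (hDz (1, 0) _ ⟨hx, hb'⟩).hasDerivWithinAt_slice_fst hb')
  refine ⟨ξ, hξ, (le_div_iff₀ (by positivity)).2 ?_⟩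
  have h0 : (0 : ℝ) ∈ Icc (-c) c := ⟨by linarith, hc.le⟩
  linarith [hvertical c (right_mem_Icc.2 hcc.le), hvertical (-c) (left_mem_Icc.2 hcc.le),
    hvertical 0 h0, hbottom c (right_mem_Icc.2 hcc.le), hbottom 0 h0]

/-- **Convexity lemma (two variables).** If `z` is a `C²` convex function on the rectangle
`[-c,c] × [0,b]` with `z_x = z_y = 0` along the edge `y = 0` and `m ≤ z_yy ≤ M` throughout,
then `z_xx(x, b) ≤ (M - m) b² / c²` at some `x ∈ [-c,c]`. -/
theorem convex_rectangle_lemma (b c m M : ℝ) (hb : 0 < b) (hc : 0 < c)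
    (z : ℝ × ℝ → ℝ) (R : Set (ℝ × ℝ)) (hR : R = Set.Icc (-c) c ×ˢ Set.Icc 0 b)
    (hsmooth : ContDiffOn ℝ 2 z R)
    (hconv : ConvexOn ℝ R z)
    (hzx0 : ∀ x ∈ Set.Icc (-c) c, fderivWithin ℝ z R (x, 0) (1, 0) = 0)
    (hzy0 : ∀ x ∈ Set.Icc (-c) c, fderivWithin ℝ z R (x, 0) (0, 1) = 0)
    (hzyy : ∀ p ∈ R,
      m ≤ fderivWithin ℝ (fun q => fderivWithin ℝ z R q (0, 1)) R p (0, 1) ∧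
      fderivWithin ℝ (fun q => fderivWithin ℝ z R q (0, 1)) R p (0, 1) ≤ M) :
    ∃ x ∈ Set.Icc (-c) c,
      fderivWithin ℝ (fun q => fderivWithin ℝ z R q (1, 0)) R (x, b) (1, 0)
        ≤ (M - m) * b ^ 2 / c ^ 2 :=
  convex_rectangle_lemma_general b c m M hb hc z R hR hsmooth hzx0 hzy0 hzyy
end

section
/- Let a > 0, let f_a be Pogorelov's profile function, and define z(ρ) = ∫_{a/2}^{ρ} √(1 - f_a'(t)²) dt for a/2 < ρ < 3a/4. Then z is twice differentiable on (a/2, 3a/4) with z''(ρ) = -f_a''(ρ)f_a'(ρ)/√(1 - f_a'(ρ)²), and the limit of z''(ρ) as ρ → a/2 from the right equals (√3/2)·a². In particular, since z extended by 0 on [0, a/2] has z'' ≡ 0 to the left of a/2, the extended function z is not twice continuously differentiable at ρ = a/2. -/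
/-!
Right of `a/2` the profile is a polynomial for which `1 - f'` vanishes to second order at `a/2`,
so `f''` and `√(1 - f'²)` both vanish to first order there. Cancelling the common factor
`ρ - a/2` turns `z'' = -f'' f' / √(1 - f'²)` into a function continuous at `a/2`, with value
`√3/2 · a²` there, whereas `z'' ≡ 0` to the left of `a/2`.
-/

open scoped RealInnerProductSpace

open Classical in
/-- Pogorelov's profile function `f_a`. -/
noncomputable def pogProfile (a ρ : ℝ) : ℝ :=
  if ρ ≤ a / 2 then ρ else ρ + a * (ρ - a) ^ 3 * (ρ - a / 2) ^ 3

open Classical in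
/-- The height function of the surface of revolution, extended by `0` for `ρ ≤ a/2`:
`z(ρ) = ∫_{a/2}^ρ √(1 - f_a'(t)²) dt`. -/
noncomputable def pogZExt (a ρ : ℝ) : ℝ :=
  if ρ ≤ a / 2 then 0
  else ∫ t in (a / 2)..ρ, Real.sqrt (1 - (deriv (pogProfile a) t) ^ 2)

open Filter Topology

section General

/-- Also true when `1 - g x ^ 2 ≤ 0`: both sides are then `0`, the left one because
`x` minimises the nonnegative function `√(1 - g ^ 2)`. -/
lemma deriv_sqrt_one_sub_sq {g : ℝ → ℝ} {g' x : ℝ} (hg : HasDerivAt g g' x) :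
    deriv (fun y => √(1 - g y ^ 2)) x = -(g' * g x) / √(1 - g x ^ 2) := by
  rcases lt_or_ge 0 (1 - g x ^ 2) with hpos | hnonpos
  · have hd : HasDerivAt (fun y => 1 - g y ^ 2) (-(2 * g x * g')) x := by
      simpa using (hg.pow 2).const_sub 1
    rw [(hd.sqrt hpos.ne').deriv]
    field_simp
  · have hzero : √(1 - g x ^ 2) = 0 := Real.sqrt_eq_zero'.mpr hnonpos
    have hmin : IsLocalMin (fun y => √(1 - g y ^ 2)) x :=
      Eventually.of_forall fun y => by simp only [hzero]; exact Real.sqrt_nonneg _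
    rw [hmin.deriv_eq_zero, hzero, div_zero]

lemma mul_div_sqrt_sq_mul {t : ℝ} (ht : 0 < t) (u r : ℝ) :
    t * u / √(t ^ 2 * r) = u / √r := by
  rw [Real.sqrt_mul (sq_nonneg t), Real.sqrt_sq ht.le, mul_div_mul_left _ _ ht.ne']

lemma hasDerivAt_integral_sqrt_one_sub_deriv_sq {f : ℝ → ℝ} {c x : ℝ}
    (hf : ContinuousAt (deriv f) x) :
    HasDerivAt (fun u => ∫ t in c..u, √(1 - deriv f t ^ 2)) (√(1 - deriv f x ^ 2)) x := by
  have hmeas : Measurable fun t => √(1 - deriv f t ^ 2) :=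
    (measurable_const.sub ((measurable_deriv f).pow_const 2)).sqrt
  have hint : IntervalIntegrable (fun t => √(1 - deriv f t ^ 2)) MeasureTheory.volume c x := by
    refine (intervalIntegrable_const (c := (1 : ℝ))).mono_fun hmeas.aestronglyMeasurable
      (MeasureTheory.ae_of_all _ fun t => ?_)
    simp only [Real.norm_eq_abs, abs_of_nonneg (Real.sqrt_nonneg _), abs_one]
    exact Real.sqrt_le_one.mpr (by nlinarith [sq_nonneg (deriv f t)])
  exact intervalIntegral.integral_hasDerivAt_right hint hmeas.stronglyMeasurable.stronglyMeasurableAtFilter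
    ((continuous_const.sub (continuous_pow 2)).sqrt.continuousAt.comp hf)

lemma not_continuousAt_of_tendsto_nhdsGT_of_tendsto_nhdsLT {f : ℝ → ℝ} {c L M : ℝ}
    (hL : Tendsto f (𝓝[>] c) (𝓝 L)) (hM : Tendsto f (𝓝[<] c) (𝓝 M)) (hLM : L ≠ M) :
    ¬ ContinuousAt f c := fun hf =>
  hLM <| (tendsto_nhds_unique (hf.tendsto.mono_left nhdsWithin_le_nhds) hL).symm.trans
    (tendsto_nhds_unique (hf.tendsto.mono_left nhdsWithin_le_nhds) hM)

end General

section Profile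

variable {a x : ℝ}

noncomputable def pogDeriv (a ρ : ℝ) : ℝ :=
  1 + 3 * a * (ρ - a) ^ 2 * (ρ - a / 2) ^ 2 * (2 * ρ - 3 * a / 2)

noncomputable def pogDeriv2Quot (a ρ : ℝ) : ℝ :=
  6 * a * (ρ - a) * ((ρ - a / 2) * (2 * ρ - 3 * a / 2) + (ρ - a) * (2 * ρ - 3 * a / 2)
    + (ρ - a) * (ρ - a / 2))

noncomputable def pogSinSqQuot (a ρ : ℝ) : ℝ :=
  3 * a * (ρ - a) ^ 2 * (3 * a / 2 - 2 * ρ) * (1 + pogDeriv a ρ)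

lemma one_sub_pogDeriv_sq (a ρ : ℝ) :
    1 - pogDeriv a ρ ^ 2 = (ρ - a / 2) ^ 2 * pogSinSqQuot a ρ := by
  unfold pogSinSqQuot pogDeriv; ring

lemma hasDerivAt_pogDeriv (a x : ℝ) :
    HasDerivAt (pogDeriv a) ((x - a / 2) * pogDeriv2Quot a x) x := by
  have h1 : HasDerivAt (fun y => y - a) 1 x := (hasDerivAt_id x).sub_const a
  have h2 : HasDerivAt (fun y => y - a / 2) 1 x := (hasDerivAt_id x).sub_const (a / 2)
  have h3 : HasDerivAt (fun y => 2 * y - 3 * a / 2) 2 x := by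
    simpa using ((hasDerivAt_id x).const_mul 2).sub_const (3 * a / 2)
  refine ((((h1.pow 2).const_mul (3 * a)).mul (h2.pow 2)).mul h3).const_add 1 |>.congr_deriv ?_
  unfold pogDeriv2Quot; simp only [Pi.pow_apply, Pi.mul_apply]; ring

lemma pogProfile_eventuallyEq (hx : a / 2 < x) :
    pogProfile a =ᶠ[𝓝 x] fun y => y + a * (y - a) ^ 3 * (y - a / 2) ^ 3 := by
  filter_upwards [Ioi_mem_nhds hx] with y hy
  exact if_neg (not_le.mpr hy)

lemma hasDerivAt_pogProfile (hx : a / 2 < x) : HasDerivAt (pogProfile a) (pogDeriv a x) x := by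
  have h1 : HasDerivAt (fun y => y - a) 1 x := (hasDerivAt_id x).sub_const a
  have h2 : HasDerivAt (fun y => y - a / 2) 1 x := (hasDerivAt_id x).sub_const (a / 2)
  have h := (hasDerivAt_id' x).add (((h1.pow 3).const_mul a).mul (h2.pow 3))
  refine (h.congr_deriv ?_).congr_of_eventuallyEq (pogProfile_eventuallyEq hx)
  unfold pogDeriv; simp only [Pi.pow_apply]; ring

lemma deriv_pogProfile_eventuallyEq (hx : a / 2 < x) : deriv (pogProfile a) =ᶠ[𝓝 x] pogDeriv a := by
  filter_upwards [Ioi_mem_nhds hx] with y hy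
  exact (hasDerivAt_pogProfile hy).deriv

lemma deriv_deriv_pogProfile (hx : a / 2 < x) :
    deriv (deriv (pogProfile a)) x = (x - a / 2) * pogDeriv2Quot a x := by
  rw [(deriv_pogProfile_eventuallyEq hx).deriv_eq, (hasDerivAt_pogDeriv a x).deriv]

end Profile

section Height

variable {a x : ℝ}

lemma deriv_pogZExt_eventuallyEq (hx : a / 2 < x) :
    deriv (pogZExt a) =ᶠ[𝓝 x] fun y => √(1 - deriv (pogProfile a) y ^ 2) := by
  filter_upwards [Ioi_mem_nhds hx] with y hy
  have hz : pogZExt a =ᶠ[𝓝 y] fun u => ∫ t in (a / 2)..u, √(1 - deriv (pogProfile a) t ^ 2) := by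
    filter_upwards [Ioi_mem_nhds hy] with u hu
    exact if_neg (not_le.mpr hu)
  have hcont : ContinuousAt (deriv (pogProfile a)) y :=
    (hasDerivAt_pogDeriv a y).continuousAt.congr (deriv_pogProfile_eventuallyEq hy).symm
  exact ((hasDerivAt_integral_sqrt_one_sub_deriv_sq hcont).congr_of_eventuallyEq hz).deriv

lemma deriv_deriv_pogZExt (hx : a / 2 < x) :
    deriv (deriv (pogZExt a)) x =
      -(deriv (deriv (pogProfile a)) x * deriv (pogProfile a) x) /
        √(1 - deriv (pogProfile a) x ^ 2) := by
  have hprofile := deriv_pogProfile_eventuallyEq hx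
  have hsqrt : deriv (pogZExt a) =ᶠ[𝓝 x] fun y => √(1 - pogDeriv a y ^ 2) := by
    filter_upwards [deriv_pogZExt_eventuallyEq hx, hprofile] with y hy hy'
    rw [hy, hy']
  rw [hsqrt.deriv_eq, deriv_sqrt_one_sub_sq (hasDerivAt_pogDeriv a x), hprofile.deriv_eq,
    (hasDerivAt_pogDeriv a x).deriv, hprofile.eq_of_nhds]

lemma deriv_deriv_pogZExt_eq_quot (hx : a / 2 < x) :
    deriv (deriv (pogZExt a)) x = -(pogDeriv2Quot a x * pogDeriv a x) / √(pogSinSqQuot a x) := by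
  rw [deriv_deriv_pogZExt hx, deriv_deriv_pogProfile hx,
    (deriv_pogProfile_eventuallyEq hx).eq_of_nhds, one_sub_pogDeriv_sq, mul_assoc, ← mul_neg,
    mul_div_sqrt_sq_mul (sub_pos.mpr hx)]

lemma tendsto_deriv_deriv_pogZExt_nhdsGT (ha : a ≠ 0) :
    Tendsto (deriv (deriv (pogZExt a))) (𝓝[>] (a / 2)) (𝓝 (√3 / 2 * a ^ 2)) := by
  have hsin : pogSinSqQuot a (a / 2) = 3 * a ^ 4 / 4 := by
    unfold pogSinSqQuot pogDeriv; ring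
  have hvalue : -(pogDeriv2Quot a (a / 2) * pogDeriv a (a / 2)) / √(pogSinSqQuot a (a / 2))
      = √3 / 2 * a ^ 2 := by
    rw [hsin, show -(pogDeriv2Quot a (a / 2) * pogDeriv a (a / 2)) = 3 * a ^ 4 / 4 by
      unfold pogDeriv2Quot pogDeriv; ring, Real.div_sqrt,
      show 3 * a ^ 4 / 4 = 3 * (a ^ 2 / 2) ^ 2 by ring, Real.sqrt_mul zero_le_three,
      Real.sqrt_sq (by positivity)]
    ring
  have hcont : ContinuousAt (fun x => -(pogDeriv2Quot a x * pogDeriv a x) / √(pogSinSqQuot a x))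
      (a / 2) := by
    refine ContinuousAt.div (by unfold pogDeriv2Quot pogDeriv; fun_prop)
      (by unfold pogSinSqQuot pogDeriv; fun_prop) ?_
    rw [hsin]
    positivity
  refine (hvalue ▸ hcont.tendsto.mono_left nhdsWithin_le_nhds).congr' ?_
  filter_upwards [self_mem_nhdsWithin] with y hy
  exact (deriv_deriv_pogZExt_eq_quot hy).symm

lemma deriv_deriv_pogZExt_of_lt (hx : x < a / 2) : deriv (deriv (pogZExt a)) x = 0 := by
  have hz : pogZExt a =ᶠ[𝓝 x] fun _ => 0 := by
    filter_upwards [Iio_mem_nhds hx] with y hy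
    exact if_pos hy.le
  rw [hz.deriv.deriv_eq, deriv_const', deriv_const]

end Height

/-- On `(a/2, 3a/4)` the height function satisfies
`z''(ρ) = -f_a''(ρ) f_a'(ρ) / √(1 - f_a'(ρ)²)`, with `z''(ρ) → (√3/2) a²` as `ρ → (a/2)⁺`;
since `z'' ≡ 0` to the left of `a/2`, the extended `z` is not `C²` at `ρ = a/2`. -/
theorem z_second_deriv_jump (a : ℝ) (ha : 0 < a) :
    (∀ ρ ∈ Set.Ioo (a / 2) (3 * a / 4),
      deriv (deriv (pogZExt a)) ρ =
        -(deriv (deriv (pogProfile a)) ρ * deriv (pogProfile a) ρ) /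
          Real.sqrt (1 - (deriv (pogProfile a) ρ) ^ 2)) ∧
    Filter.Tendsto (deriv (deriv (pogZExt a))) (nhdsWithin (a / 2) (Set.Ioi (a / 2)))
      (nhds (Real.sqrt 3 / 2 * a ^ 2)) ∧
    (∀ ρ < a / 2, deriv (deriv (pogZExt a)) ρ = 0) ∧
    ¬ ContinuousAt (deriv (deriv (pogZExt a))) (a / 2) := by
  have hright := tendsto_deriv_deriv_pogZExt_nhdsGT ha.ne'
  have hleft : Tendsto (deriv (deriv (pogZExt a))) (𝓝[<] (a / 2)) (𝓝 0) :=
    tendsto_const_nhds.congr' <| eventually_nhdsWithin_of_forall fun _ hy =>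
      (deriv_deriv_pogZExt_of_lt hy).symm
  refine ⟨fun ρ hρ => deriv_deriv_pogZExt hρ.1, hright, fun ρ hρ => deriv_deriv_pogZExt_of_lt hρ,
    not_continuousAt_of_tendsto_nhdsGT_of_tendsto_nhdsLT hright hleft (by positivity)⟩
end

section
/- Let a > 0 and let f_a : [0,a) → ℝ be Pogorelov's profile function. Then f_a is of class C^{2,1} on [0, a): f_a is twice continuously differentiable on [0,a) (in particular f_a, f_a' and f_a'' match across ρ = a/2, with f_a'(a/2) = 1 and f_a''(a/2) = 0), and f_a'' is Lipschitz continuous on every compact subinterval of [0, a). -/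
open scoped RealInnerProductSpace

/-!
Writing `p ρ = max (ρ - a/2) 0`, the profile is `ρ + a (ρ - a)³ p³` on all of `ℝ`. Since
`x ↦ max x 0 ^ (n + 1)` is differentiable with derivative `(n + 1) max x 0 ^ n` as soon as
`n ≥ 1`, the product rule gives `f_a'` and `f_a''` in closed form. The second derivative is a
polynomial in `ρ - a` and `p ρ`; as `p` is Lipschitz, `f_a''` is locally Lipschitz, hence
Lipschitz on every compact set.
-/

open Topology

lemma hasDerivAt_max_zero_pow {n : ℕ} (hn : n ≠ 0) (x : ℝ) :
    HasDerivAt (fun y : ℝ => max y 0 ^ (n + 1)) ((n + 1) * max x 0 ^ n) x := by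
  refine hasDerivAt_of_hasDerivAt_of_ne' (f := fun y : ℝ => max y 0 ^ (n + 1))
    (g := fun y => (n + 1) * max y 0 ^ n) (x := 0) (fun y hy => ?_) (by fun_prop) (by fun_prop) x
  rcases hy.lt_or_gt with hy | hy
  · have hzero : (fun z : ℝ => max z 0 ^ (n + 1)) =ᶠ[𝓝 y] fun _ => 0 := by
      filter_upwards [Iio_mem_nhds hy] with z hz
      simp [max_eq_right (Set.mem_Iio.1 hz).le]
    simpa [max_eq_right hy.le, hn] using (hasDerivAt_const y (0 : ℝ)).congr_of_eventuallyEq hzero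
  · have hpow : (fun z : ℝ => max z 0 ^ (n + 1)) =ᶠ[𝓝 y] fun z => z ^ (n + 1) := by
      filter_upwards [Ioi_mem_nhds hy] with z hz
      simp [max_eq_left (Set.mem_Ioi.1 hz).le]
    simpa [max_eq_left hy.le] using (hasDerivAt_pow (n + 1) y).congr_of_eventuallyEq hpow

noncomputable def pogProfileDeriv (a ρ : ℝ) : ℝ :=
  1 + 3 * a * (ρ - a) ^ 2 * max (ρ - a / 2) 0 ^ 2 * (max (ρ - a / 2) 0 + (ρ - a))

noncomputable def pogProfileDeriv2 (a ρ : ℝ) : ℝ :=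
  6 * a * (ρ - a) * max (ρ - a / 2) 0 *
    (max (ρ - a / 2) 0 ^ 2 + 3 * (ρ - a) * max (ρ - a / 2) 0 + (ρ - a) ^ 2)

lemma pogProfile_eq (a : ℝ) :
    pogProfile a = fun ρ => ρ + a * (ρ - a) ^ 3 * max (ρ - a / 2) 0 ^ 3 := by
  funext ρ
  rcases le_or_gt ρ (a / 2) with h | h
  · simp [pogProfile, h]
  · simp [pogProfile, h.not_ge, max_eq_left (sub_pos.2 h).le]

lemma hasDerivAt_pogProfile_s14 (a ρ : ℝ) : HasDerivAt (pogProfile a) (pogProfileDeriv a ρ) ρ := by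
  have hu := (hasDerivAt_pow 3 (ρ - a)).comp_sub_const ρ a
  have hp := (hasDerivAt_max_zero_pow two_ne_zero (ρ - a / 2)).comp_sub_const ρ (a / 2)
  rw [pogProfile_eq]
  refine ((hasDerivAt_id' ρ).add ((hu.const_mul a).mul hp)).congr_deriv ?_
  simp only [pogProfileDeriv]
  push_cast
  ring

lemma hasDerivAt_pogProfileDeriv (a ρ : ℝ) :
    HasDerivAt (pogProfileDeriv a) (pogProfileDeriv2 a ρ) ρ := by
  have hu₂ := (hasDerivAt_pow 2 (ρ - a)).comp_sub_const ρ a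
  have hu₃ := (hasDerivAt_pow 3 (ρ - a)).comp_sub_const ρ a
  have hp₂ := (hasDerivAt_max_zero_pow one_ne_zero (ρ - a / 2)).comp_sub_const ρ (a / 2)
  have hp₃ := (hasDerivAt_max_zero_pow two_ne_zero (ρ - a / 2)).comp_sub_const ρ (a / 2)
  refine ((((hu₂.const_mul (3 * a)).mul hp₃).add
    ((hu₃.const_mul (3 * a)).mul hp₂)).const_add 1).congr_deriv ?_ |>.congr_of_eventuallyEq
      (.of_forall fun x => ?_)
  · simp only [pogProfileDeriv2]
    push_cast
    ring
  · simp only [pogProfileDeriv, Pi.add_apply, Pi.mul_apply]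
    ring

lemma deriv_pogProfile (a : ℝ) : deriv (pogProfile a) = pogProfileDeriv a :=
  funext fun ρ => (hasDerivAt_pogProfile_s14 a ρ).deriv

lemma deriv_pogProfileDeriv (a : ℝ) : deriv (pogProfileDeriv a) = pogProfileDeriv2 a :=
  funext fun ρ => (hasDerivAt_pogProfileDeriv a ρ).deriv

lemma locallyLipschitz_pogProfileDeriv2 (a : ℝ) : LocallyLipschitz (pogProfileDeriv2 a) := by
  have hpoly : LocallyLipschitz fun q : ℝ × ℝ =>
      6 * a * q.1 * q.2 * (q.2 ^ 2 + 3 * q.1 * q.2 + q.1 ^ 2) :=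
    ContDiff.locallyLipschitz (𝕂 := ℝ) (by fun_prop)
  exact hpoly.comp ((LocallyLipschitz.id.sub (.const a)).prodMk
    ((LocallyLipschitz.id.sub (.const (a / 2))).max_const 0))

lemma contDiff_two_pogProfile (a : ℝ) : ContDiff ℝ 2 (pogProfile a) := by
  rw [show (2 : WithTop ℕ∞) = 1 + 1 from rfl, contDiff_succ_iff_deriv, deriv_pogProfile,
    contDiff_one_iff_deriv, deriv_pogProfileDeriv]
  exact ⟨fun ρ => (hasDerivAt_pogProfile_s14 a ρ).differentiableAt, by simp,
    fun ρ => (hasDerivAt_pogProfileDeriv a ρ).differentiableAt,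
    (locallyLipschitz_pogProfileDeriv2 a).continuous⟩

theorem profile_isC21_general (a : ℝ) :
    ContDiffOn ℝ 2 (pogProfile a) (Set.Ico 0 a) ∧
    deriv (pogProfile a) (a / 2) = 1 ∧
    deriv (deriv (pogProfile a)) (a / 2) = 0 ∧
    ∀ s : Set ℝ, IsCompact s → s ⊆ Set.Ico 0 a →
      ∃ K : NNReal, LipschitzOnWith K (deriv (deriv (pogProfile a))) s := by
  rw [deriv_pogProfile, deriv_pogProfileDeriv]
  refine ⟨(contDiff_two_pogProfile a).contDiffOn, by simp [pogProfileDeriv],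
    by simp [pogProfileDeriv2], fun s hs _ => ?_⟩
  exact (locallyLipschitz_pogProfileDeriv2 a).locallyLipschitzOn
    |>.exists_lipschitzOnWith_of_compact hs

/-- Pogorelov's profile function `f_a` is of class `C^{2,1}` on `[0, a)`: it is twice
continuously differentiable there (in particular `f_a'(a/2) = 1` and `f_a''(a/2) = 0`),
and `f_a''` is Lipschitz on every compact subset of `[0, a)`. -/
theorem profile_isC21 (a : ℝ) (ha : 0 < a) :
    ContDiffOn ℝ 2 (pogProfile a) (Set.Ico 0 a) ∧
    deriv (pogProfile a) (a / 2) = 1 ∧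
    deriv (deriv (pogProfile a)) (a / 2) = 0 ∧
    ∀ s : Set ℝ, IsCompact s → s ⊆ Set.Ico 0 a →
      ∃ K : NNReal, LipschitzOnWith K (deriv (deriv (pogProfile a))) s :=
  profile_isC21_general a
end
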